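/- arXiv:2402.09850 — 3 statements merged into one kernel-verified Lean document; each statement's English description precedes it below -/
import Mathlib

section
/- Let r(t) = Σ_{j=0}^m p_j b^m_j(t) and s(t) = Σ_{j=0}^n q_j b^n_j(t) be complex polynomials in Bernstein form, and let z_k = Σ_{j=max(0,k−n)}^{min(m,k)} [C(m,j)·C(n,k−j)/C(m+n,k)]·p_j·conj(q_{k−j}) for k = 0,…,m+n. Then the inner product satisfies ⟨r,s⟩ = (z_0 + z_1 + ⋯ + z_{m+n})/(m+n+1). -/
/-! The product of Bernstein forms of degrees `m` and `n` is a Bernstein form of degree `m + n`,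
since `b^m_j b^n_i = C(m,j) C(n,i) / C(m+n,j+i) · b^{m+n}_{j+i}`; its coefficients are exactly
the `z_k`. Every Bernstein basis polynomial of degree `N` has integral `1/(N+1)` (a Beta
integral), so the integral of the product is the mean of the `z_k`. -/

open MeasureTheory

noncomputable def bern (n k : ℕ) (t : ℝ) : ℝ :=
  (n.choose k : ℝ) * (1 - t) ^ (n - k) * t ^ k

open Finset Nat

theorem continuous_bern (n k : ℕ) : Continuous (bern n k) := by
  unfold bern
  fun_prop

theorem bern_mul_bern {m n j i : ℕ} (hj : j ≤ m) (hi : i ≤ n) (t : ℝ) :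
    bern m j t * bern n i t
      = m.choose j * n.choose i / (m + n).choose (j + i) * bern (m + n) (j + i) t := by
  have hc : ((m + n).choose (j + i) : ℝ) ≠ 0 := by
    exact_mod_cast (Nat.choose_pos (by omega)).ne'
  rw [div_mul_eq_mul_div, eq_div_iff hc]
  simp only [bern]
  rw [show m + n - (j + i) = (m - j) + (n - i) by omega]
  ring

theorem integral_pow_mul_one_sub_pow (a b : ℕ) :
    ∫ t in (0:ℝ)..1, (t : ℂ) ^ a * (1 - (t : ℂ)) ^ b = a ! * b ! / (a + b + 1)! := by
  have hΓ := Complex.Gamma_mul_Gamma_eq_betaIntegral (s := a + 1) (t := b + 1)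
    (by simp only [Complex.add_re, Complex.natCast_re, Complex.one_re]; positivity)
    (by simp only [Complex.add_re, Complex.natCast_re, Complex.one_re]; positivity)
  rw [show (a : ℂ) + 1 + (b + 1) = ((a + b + 1 : ℕ) : ℂ) + 1 by push_cast; ring,
    Complex.Gamma_nat_eq_factorial, Complex.Gamma_nat_eq_factorial,
    Complex.Gamma_nat_eq_factorial] at hΓ
  have hβ : ∫ t in (0:ℝ)..1, (t : ℂ) ^ a * (1 - (t : ℂ)) ^ b
      = Complex.betaIntegral (a + 1) (b + 1) := by
    refine intervalIntegral.integral_congr fun t _ => ?_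
    simp only [add_sub_cancel_right, Complex.cpow_natCast]
  rw [hβ, eq_div_iff (Nat.cast_ne_zero.mpr (factorial_ne_zero _)), mul_comm, hΓ]

theorem integral_bern {N k : ℕ} (hk : k ≤ N) :
    ∫ t in (0:ℝ)..1, (bern N k t : ℂ) = 1 / (N + 1) := by
  have hform : ∀ t : ℝ,
      (bern N k t : ℂ) = N.choose k * ((t : ℂ) ^ k * (1 - (t : ℂ)) ^ (N - k)) := by
    intro t
    push_cast [bern]
    ring
  simp_rw [hform]
  rw [intervalIntegral.integral_const_mul, integral_pow_mul_one_sub_pow,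
    Nat.add_sub_cancel' hk, ← mul_div_assoc, ← mul_assoc]
  have hN : (N.choose k * k ! * (N - k)! : ℂ) = N ! := by
    exact_mod_cast Nat.choose_mul_factorial_mul_factorial hk
  have hN0 : (N ! : ℂ) ≠ 0 := Nat.cast_ne_zero.mpr (factorial_ne_zero N)
  rw [hN, Nat.factorial_succ]
  push_cast
  field_simp

theorem integral_bernstein_sum (N : ℕ) (c : ℕ → ℂ) :
    ∫ t in (0:ℝ)..1, ∑ k ∈ range (N + 1), c k * (bern N k t : ℂ)
      = (∑ k ∈ range (N + 1), c k) / ((N + 1 : ℕ) : ℂ) := by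
  have hint : ∀ k, IntervalIntegrable (fun t => c k * (bern N k t : ℂ)) volume 0 1 :=
    fun k => (continuous_const.mul
      (Complex.continuous_ofReal.comp (continuous_bern N k))).intervalIntegrable _ _
  rw [intervalIntegral.integral_finsetSum fun k _ => hint k, sum_div]
  refine sum_congr rfl fun k hk => ?_
  rw [intervalIntegral.integral_const_mul, integral_bern (by simp only [mem_range] at hk; omega)]
  push_cast
  ring

theorem sum_range_sum_range_eq_sum_range_sum_Icc {M : Type*} [AddCommMonoid M] (m n : ℕ)
    (f : ℕ → ℕ → M) :
    ∑ j ∈ range (m + 1), ∑ i ∈ range (n + 1), f j i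
      = ∑ k ∈ range (m + n + 1), ∑ j ∈ Icc (k - n) (min m k), f j (k - j) := by
  rw [sum_sigma', sum_sigma']
  refine sum_nbij' (fun x => ⟨x.1 + x.2, x.1⟩) (fun x => ⟨x.2, x.1 - x.2⟩) ?_ ?_ ?_ ?_ ?_
  · rintro ⟨j, i⟩ h
    simp only [mem_sigma, mem_range, mem_Icc] at h ⊢
    omega
  · rintro ⟨k, j⟩ h
    simp only [mem_sigma, mem_range, mem_Icc] at h ⊢
    omega
  · rintro ⟨j, i⟩ -
    simp
  · rintro ⟨k, j⟩ h
    simp only [mem_sigma, mem_Icc] at h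
    ext <;> simp only [heq_eq_eq]; omega
  · rintro ⟨j, i⟩ -
    simp

theorem bernstein_sum_mul_bernstein_sum (m n : ℕ) (a b : ℕ → ℂ) (t : ℝ) :
    (∑ j ∈ range (m + 1), a j * (bern m j t : ℂ)) *
        (∑ i ∈ range (n + 1), b i * (bern n i t : ℂ))
      = ∑ k ∈ range (m + n + 1),
          (∑ j ∈ Icc (k - n) (min m k),
            (m.choose j * n.choose (k - j) / (m + n).choose k : ℂ) * a j * b (k - j))
            * (bern (m + n) k t : ℂ) := by
  rw [sum_mul_sum, sum_range_sum_range_eq_sum_range_sum_Icc]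
  refine sum_congr rfl fun k _ => ?_
  rw [sum_mul]
  refine sum_congr rfl fun j hj => ?_
  simp only [mem_Icc] at hj
  have hprod := bern_mul_bern (m := m) (n := n) (j := j) (i := k - j) (by omega) (by omega) t
  rw [show j + (k - j) = k by omega] at hprod
  calc a j * (bern m j t : ℂ) * (b (k - j) * (bern n (k - j) t : ℂ))
      = a j * b (k - j) * ((bern m j t * bern n (k - j) t : ℝ) : ℂ) := by push_cast; ring
    _ = _ := by rw [hprod]; push_cast; ring

/-- For r(t) = Σ_{j=0}^m p_j b^m_j(t), s(t) = Σ_{j=0}^n q_j b^n_j(t) in Bernstein form and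
z_k = Σ_{j=max(0,k−n)}^{min(m,k)} [C(m,j)·C(n,k−j)/C(m+n,k)]·p_j·conj(q_{k−j}), the
inner product satisfies ⟨r,s⟩ = (z_0 + ⋯ + z_{m+n})/(m+n+1). -/
theorem stmt5 (m n : ℕ) (p q z : ℕ → ℂ)
    (hz : ∀ k, k ≤ m + n → z k =
      ∑ j ∈ Finset.Icc (max 0 (k - n)) (min m k),
        (((m.choose j : ℕ) : ℂ) * ((n.choose (k - j) : ℕ) : ℂ) / (((m + n).choose k : ℕ) : ℂ))
          * p j * (starRingEnd ℂ) (q (k - j))) :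
    (∫ t in (0:ℝ)..1,
        (∑ j ∈ Finset.range (m + 1), p j * (bern m j t : ℂ)) *
          (starRingEnd ℂ) (∑ j ∈ Finset.range (n + 1), q j * (bern n j t : ℂ)))
      = (∑ k ∈ Finset.range (m + n + 1), z k) / ((m + n + 1 : ℕ) : ℂ) := by
  simp only [Nat.zero_max] at hz
  have hprod : ∀ t : ℝ,
      (∑ j ∈ range (m + 1), p j * (bern m j t : ℂ)) *
          (starRingEnd ℂ) (∑ j ∈ range (n + 1), q j * (bern n j t : ℂ))
        = ∑ k ∈ range (m + n + 1), z k * (bern (m + n) k t : ℂ) := by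
    intro t
    simp only [map_sum, map_mul, Complex.conj_ofReal]
    rw [bernstein_sum_mul_bernstein_sum]
    refine sum_congr rfl fun k hk => ?_
    rw [hz k (by simp only [mem_range] at hk; omega)]
  simp_rw [hprod]
  exact integral_bernstein_sum (m + n) z
end

section
/- Let p(t) be a polynomial of degree at most n expressed in the shifted Legendre and Bernstein bases on [0,1] as p(t) = Σ_{k=0}^n c_k L_k(t) = Σ_{j=0}^n d_j b^n_j(t). Then the coefficient vectors are related by d_j = Σ_{k=0}^n M_{n,jk} c_k for j = 0,…,n, where M_{n,jk} = [√(2k+1)/C(n,j)]·Σ_{i=max(0,j+k−n)}^{min(j,k)} (−1)^{k+i} C(k,i)² C(n−k, j−i). Equivalently, L_k(t) = Σ_{j=0}^n M_{n,jk} b^n_j(t) for each k = 0,…,n. -/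
/-- The orthonormal shifted Legendre polynomial on [0,1]:
L_k(t) = √(2k+1)·Σ_{i=0}^k (−1)^{k+i} C(k,i)² (1−t)^{k−i} t^i. -/
noncomputable def legendreL (k : ℕ) (t : ℝ) : ℝ :=
  Real.sqrt (2 * k + 1) * ∑ i ∈ Finset.range (k + 1),
    (-1 : ℝ) ^ (k + i) * (k.choose i : ℝ) ^ 2 * (1 - t) ^ (k - i) * t ^ i

/-- Entry (j,k) of the matrix M_n converting shifted Legendre coefficients to degree-n
Bernstein coefficients:
M_{n,jk} = [√(2k+1)/C(n,j)]·Σ_{i=max(0,j+k−n)}^{min(j,k)} (−1)^{k+i} C(k,i)² C(n−k,j−i). -/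
noncomputable def Mentry (n j k : ℕ) : ℝ :=
  (Real.sqrt (2 * k + 1) / (n.choose j : ℝ)) *
    ∑ i ∈ Finset.Icc (max 0 (j + k - n)) (min j k),
      (-1 : ℝ) ^ (k + i) * (k.choose i : ℝ) ^ 2 * ((n - k).choose (j - i) : ℝ)

/-!
Degree elevation: multiplying `(1 - t)^(k-i) t^i` by `((1 - t) + t)^(n-k)` writes each term of
`L_k` in the degree-`n` Bernstein basis, and collecting the terms by the Bernstein index `j` gives
the column `M_{n,·k}`. The coefficient relation then follows from the linear independence of the
Bernstein basis: under `t = s / (1 + s)` one has `(1 + s)^n b^n_j(t) = C(n,j) s^j`, so a vanishing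
Bernstein combination becomes a polynomial in `s` with infinitely many roots.
-/

open Finset Polynomial

theorem pow_mul_pow_eq_sum_Icc_of_add_eq_one {R : Type*} [CommSemiring R] {x y : R}
    (hxy : x + y = 1) {i k n : ℕ} (hik : i ≤ k) (hkn : k ≤ n) :
    x ^ (k - i) * y ^ i =
      ∑ j ∈ Icc i (i + (n - k)), ((n - k).choose (j - i) : R) * x ^ (n - j) * y ^ j := by
  have hIcc : Icc i (i + (n - k)) = (range (n - k + 1)).map (addLeftEmbedding i) := by
    ext j
    simp only [mem_Icc, mem_map, mem_range, addLeftEmbedding_apply]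
    constructor
    · exact fun hj => ⟨j - i, by omega, by omega⟩
    · rintro ⟨r, hr, rfl⟩
      omega
  calc x ^ (k - i) * y ^ i = x ^ (k - i) * y ^ i * (y + x) ^ (n - k) := by
        rw [add_comm, hxy, one_pow, mul_one]
    _ = ∑ r ∈ range (n - k + 1), ((n - k).choose r : R) * x ^ (n - (i + r)) * y ^ (i + r) := by
        rw [add_pow, mul_sum]
        refine sum_congr rfl fun r hr => ?_
        rw [mem_range] at hr
        rw [show n - (i + r) = (k - i) + (n - k - r) by omega, pow_add, pow_add]
        ring
    _ = _ := by
        rw [hIcc, sum_map]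
        simp only [addLeftEmbedding_apply, Nat.add_sub_cancel_left]

theorem legendreL_eq_sum_bern {n k : ℕ} (hk : k ≤ n) (t : ℝ) :
    legendreL k t = ∑ j ∈ range (n + 1), Mentry n j k * bern n j t := by
  have hswap : ∀ i j, i ∈ range (k + 1) ∧ j ∈ Icc i (i + (n - k)) ↔
      i ∈ Icc (max 0 (j + k - n)) (min j k) ∧ j ∈ range (n + 1) := by
    intro i j
    simp only [mem_range, mem_Icc, le_min_iff, max_le_iff]
    omega
  have hbern : ∀ j ∈ range (n + 1), ∀ i,
      ((n - k).choose (j - i) : ℝ) * (1 - t) ^ (n - j) * t ^ j = ((n - k).choose (j - i) : ℝ) / n.choose j * bern n j t := by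
    intro j hj i
    have : (n.choose j : ℝ) ≠ 0 := by
      exact_mod_cast (Nat.choose_pos (Nat.lt_succ_iff.mp (mem_range.mp hj))).ne'
    rw [bern]
    field_simp
  calc legendreL k t
      = √(2 * k + 1) * ∑ i ∈ range (k + 1), ∑ j ∈ Icc i (i + (n - k)), (-1 : ℝ) ^ (k + i)
          * (k.choose i : ℝ) ^ 2 * (((n - k).choose (j - i) : ℝ) * (1 - t) ^ (n - j) * t ^ j) := by
        rw [legendreL]
        congr 1
        refine sum_congr rfl fun i hi => ?_
        rw [mul_assoc _ ((1 - t) ^ _), pow_mul_pow_eq_sum_Icc_of_add_eq_one (sub_add_cancel 1 t)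
          (Nat.lt_succ_iff.mp (mem_range.mp hi)) hk, mul_sum]
    _ = √(2 * k + 1) * ∑ j ∈ range (n + 1), ∑ i ∈ Icc (max 0 (j + k - n)) (min j k),
          (-1 : ℝ) ^ (k + i) * (k.choose i : ℝ) ^ 2
            * (((n - k).choose (j - i) : ℝ) / n.choose j * bern n j t) := by
        rw [sum_comm' hswap]
        congr 1
        refine sum_congr rfl fun j hj => sum_congr rfl fun i _ => ?_
        rw [hbern j hj]
    _ = _ := by
        rw [mul_sum]
        refine sum_congr rfl fun j _ => ?_
        rw [Mentry, mul_sum, mul_sum, sum_mul]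
        refine sum_congr rfl fun i _ => ?_
        ring

theorem one_add_pow_mul_bern {n j : ℕ} (hj : j ≤ n) {s : ℝ} (hs : 1 + s ≠ 0) :
    (1 + s) ^ n * bern n j (s / (1 + s)) = n.choose j * s ^ j := by
  have h1 : (1 + s) * (1 - s / (1 + s)) = 1 := by field_simp; ring
  have h2 : (1 + s) * (s / (1 + s)) = s := by field_simp
  calc (1 + s) ^ n * bern n j (s / (1 + s))
      = n.choose j * ((1 + s) * (1 - s / (1 + s))) ^ (n - j) * ((1 + s) * (s / (1 + s))) ^ j := by
        rw [bern, mul_pow, mul_pow, ← Nat.sub_add_cancel hj, pow_add, Nat.add_sub_cancel]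
        ring
    _ = n.choose j * s ^ j := by rw [h1, h2, one_pow, mul_one]

theorem eq_zero_of_forall_sum_mul_bern_eq_zero {n : ℕ} {e : ℕ → ℝ}
    (h : ∀ t, ∑ j ∈ range (n + 1), e j * bern n j t = 0) {j : ℕ} (hj : j ≤ n) : e j = 0 := by
  set q : ℝ[X] := ∑ j ∈ range (n + 1), C (e j * n.choose j) * X ^ j
  have hroot : ∀ s : ℝ, s ≠ -1 → q.IsRoot s := by
    intro s hs
    have hs' : 1 + s ≠ 0 := fun h' => hs (by linarith)
    calc q.eval s = (1 + s) ^ n * ∑ j ∈ range (n + 1), e j * bern n j (s / (1 + s)) := by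
          simp only [q, eval_finsetSum, eval_mul, eval_C, eval_pow, eval_X, mul_sum]
          refine sum_congr rfl fun j hj => ?_
          rw [mul_left_comm, one_add_pow_mul_bern (Nat.lt_succ_iff.mp (mem_range.mp hj)) hs']
          ring
      _ = 0 := by rw [h, mul_zero]
  have hq : q = 0 := q.eq_zero_of_infinite_isRoot <|
    ((Set.finite_singleton (-1 : ℝ)).infinite_compl).mono hroot
  have hcoeff : e j * n.choose j = 0 := by
    simpa only [q, finsetSum_coeff, coeff_C_mul_X_pow, sum_ite_eq, mem_range,
      Nat.lt_succ_iff.mpr hj, if_true, coeff_zero] using congrArg (coeff · j) hq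
  exact (mul_eq_zero.mp hcoeff).resolve_right (by exact_mod_cast (Nat.choose_pos hj).ne')

/-- If p(t) = Σ_{k=0}^n c_k L_k(t) = Σ_{j=0}^n d_j b^n_j(t) is a polynomial of degree at most n
expressed in the shifted Legendre and Bernstein bases, then d_j = Σ_{k=0}^n M_{n,jk} c_k for
j = 0,…,n; equivalently L_k(t) = Σ_{j=0}^n M_{n,jk} b^n_j(t) for each k = 0,…,n. -/
theorem stmt14 (n : ℕ) (c d : ℕ → ℝ)
    (h : ∀ t : ℝ, ∑ k ∈ Finset.range (n + 1), c k * legendreL k t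
        = ∑ j ∈ Finset.range (n + 1), d j * bern n j t) :
    (∀ j, j ≤ n → d j = ∑ k ∈ Finset.range (n + 1), Mentry n j k * c k) ∧
    (∀ k, k ≤ n → ∀ t : ℝ,
        legendreL k t = ∑ j ∈ Finset.range (n + 1), Mentry n j k * bern n j t) := by
  refine ⟨fun j hj => ?_, fun k hk t => legendreL_eq_sum_bern hk t⟩
  have hlegendre : ∀ t, ∑ k ∈ range (n + 1), c k * legendreL k t
      = ∑ j ∈ range (n + 1), (∑ k ∈ range (n + 1), Mentry n j k * c k) * bern n j t := by
    intro t
    simp only [sum_mul]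
    rw [sum_comm]
    refine sum_congr rfl fun k hk => ?_
    rw [legendreL_eq_sum_bern (Nat.lt_succ_iff.mp (mem_range.mp hk)), mul_sum]
    exact sum_congr rfl fun j _ => by ring
  have hdiff : ∀ t, ∑ j ∈ range (n + 1),
      (d j - ∑ k ∈ range (n + 1), Mentry n j k * c k) * bern n j t = 0 := by
    intro t
    simp only [sub_mul, sum_sub_distrib, ← h t, hlegendre t, sub_self]
  exact sub_eq_zero.mp (eq_zero_of_forall_sum_mul_bern_eq_zero hdiff hj)
end

section
/- The columns of the Legendre-to-Bernstein conversion matrix M_n are pairwise orthogonal: for 0 ≤ k ≠ ℓ ≤ n, Σ_{j=0}^n M_{n,jk}·M_{n,jℓ} = 0, where M_{n,jk} = [√(2k+1)/C(n,j)]·Σ_{i=max(0,j+k−n)}^{min(j,k)} (−1)^{k+i} C(k,i)² C(n−k, j−i). -/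
/-!
Put `t = x / (1 + x)` and multiply by `(1 + x) ^ n`: then `bern n j t` becomes `C(n, j) x ^ j`
and `legendreL k t` becomes `√(2k+1) P_k(x) (1 + x) ^ (n - k)` with
`P_k(x) = ∑ (-1)^(k+i) C(k,i)² x^i`. Hence the `k`-th column of `M_n` is `√(2k+1)` times the
sequence `c_j = [x^j] P_k(x) (1 + x)^(n-k) / C(n, j)`. The Legendre differential
equation becomes a three-term recurrence saying that `c` is an eigenvector, for the eigenvalue
`-k(k+1)`, of the discrete Sturm–Liouville operator `u ↦ Δ(γ ∇u)` with `γ_j = j (n + 1 - j)`.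
Since `γ` vanishes at `0` and `n + 1`, summation by parts shows this operator is symmetric on
`ℝ^{n+1}`, and eigenvectors for distinct eigenvalues are orthogonal.
-/

open Polynomial Finset

theorem Nat.cast_choose_succ_right_eq {R : Type*} [CommRing R] (n m : ℕ) :
    (n.choose (m + 1) : R) * (m + 1) = n.choose m * (n - m) := by
  rcases le_or_gt m n with h | h
  · have := congrArg (Nat.cast (R := R)) (Nat.choose_succ_right_eq n m)
    push_cast [Nat.cast_sub h] at this
    exact this
  · simp [Nat.choose_eq_zero_of_lt h, Nat.choose_eq_zero_of_lt (Nat.lt_succ_of_lt h)]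

section SturmLiouville

def sturmOp {R : Type*} [CommRing R] (γ u : ℕ → R) (j : ℕ) : R :=
  γ (j + 1) * (u (j + 1) - u j) - γ j * (u j - u (j - 1))

variable {R : Type*} [CommRing R] {γ : ℕ → R} {n : ℕ}

theorem sum_sturmOp_mul (h₀ : γ 0 = 0) (hn : γ (n + 1) = 0) (u v : ℕ → R) :
    ∑ j ∈ range (n + 1), sturmOp γ u j * v j =
      -∑ j ∈ range n, γ (j + 1) * (u (j + 1) - u j) * (v (j + 1) - v j) := by
  have hfwd : ∑ j ∈ range (n + 1), γ (j + 1) * (u (j + 1) - u j) * v j =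
      ∑ j ∈ range n, γ (j + 1) * (u (j + 1) - u j) * v j := by
    rw [sum_range_succ, hn]; ring
  have hbwd : ∑ j ∈ range (n + 1), γ j * (u j - u (j - 1)) * v j =
      ∑ j ∈ range n, γ (j + 1) * (u (j + 1) - u j) * v (j + 1) := by
    rw [sum_range_succ', h₀]; simp
  simp only [sturmOp, sub_mul, sum_sub_distrib, hfwd, hbwd, ← sum_neg_distrib]
  rw [← sum_sub_distrib]
  exact sum_congr rfl fun j _ => by ring

theorem sum_mul_eq_zero_of_sturmOp_eq_smul [NoZeroDivisors R] (h₀ : γ 0 = 0)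
    (hn : γ (n + 1) = 0) {u v : ℕ → R} {μ ν : R}
    (hu : ∀ j ≤ n, sturmOp γ u j = μ * u j)
    (hv : ∀ j ≤ n, sturmOp γ v j = ν * v j) (hμν : μ ≠ ν) :
    ∑ j ∈ range (n + 1), u j * v j = 0 := by
  have hsymm : ∑ j ∈ range (n + 1), sturmOp γ u j * v j =
      ∑ j ∈ range (n + 1), sturmOp γ v j * u j := by
    rw [sum_sturmOp_mul h₀ hn, sum_sturmOp_mul h₀ hn]
    exact congrArg _ (sum_congr rfl fun j _ => by ring)
  have hdiff : (μ - ν) * ∑ j ∈ range (n + 1), u j * v j = 0 := by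
    rw [sub_mul, mul_sum, mul_sum, sub_eq_zero]
    convert hsymm using 1 <;> refine sum_congr rfl fun j hj => ?_
    · rw [hu j (Nat.lt_succ_iff.mp (mem_range.mp hj))]; ring
    · rw [hv j (Nat.lt_succ_iff.mp (mem_range.mp hj))]; ring
  exact (mul_eq_zero.mp hdiff).resolve_left (sub_ne_zero.mpr hμν)

end SturmLiouville

noncomputable def legendreCoeff (k i : ℕ) : ℝ := (-1) ^ (k + i) * (k.choose i : ℝ) ^ 2

theorem legendreCoeff_eq_zero_of_lt {k i : ℕ} (h : k < i) : legendreCoeff k i = 0 := by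
  simp [legendreCoeff, Nat.choose_eq_zero_of_lt h]

theorem legendreCoeff_recurrence (k i : ℕ) :
    ((i : ℝ) + 1) ^ 2 * legendreCoeff k (i + 1) + ((k : ℝ) - i) ^ 2 * legendreCoeff k i
      = 0 := by
  rcases lt_or_ge i k with h | h
  · have hc := Nat.cast_choose_succ_right_eq (R := ℝ) k i
    simp only [legendreCoeff, ← add_assoc, pow_succ (-1 : ℝ) (k + i)]
    linear_combination
      (-(-1 : ℝ) ^ (k + i) * ((k.choose (i + 1) : ℝ) * (i + 1) + k.choose i * (k - i))) * hc
  · rw [legendreCoeff_eq_zero_of_lt (by omega : k < i + 1)]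
    rcases h.eq_or_lt with rfl | h
    · simp
    · simp [legendreCoeff_eq_zero_of_lt h]

noncomputable def legendrePoly (k : ℕ) : ℝ[X] :=
  ∑ i ∈ range (k + 1), C (legendreCoeff k i) * X ^ i

theorem coeff_legendrePoly (k i : ℕ) : (legendrePoly k).coeff i = legendreCoeff k i := by
  simp only [legendrePoly, finsetSum_coeff, coeff_C_mul, coeff_X_pow, mul_ite, mul_one,
    mul_zero, sum_ite_eq, mem_range]
  split_ifs
  · rfl
  · exact (legendreCoeff_eq_zero_of_lt (by omega)).symm

theorem natDegree_legendrePoly_le (k : ℕ) : (legendrePoly k).natDegree ≤ k :=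
  natDegree_sum_le_of_forall_le _ _ fun _ hi =>
    (natDegree_C_mul_X_pow_le _ _).trans (Nat.lt_succ_iff.mp (mem_range.mp hi))

-- `x (x + 1) P'' + (1 + (1 - 2k) x) P' + k² P = 0`, with every power of `X` written as nested
-- products `X * _` so that coefficients can be read off with `coeff_X_mul`.
theorem legendrePoly_ode (k : ℕ) :
    X * (X * derivative (derivative (legendrePoly k)))
      + X * derivative (derivative (legendrePoly k)) + derivative (legendrePoly k)
      + C (1 - 2 * (k : ℝ)) * (X * derivative (legendrePoly k))
      + C ((k : ℝ) ^ 2) * legendrePoly k = 0 := by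
  ext (_ | _ | m)
  · simp only [coeff_add, mul_coeff_zero, coeff_X_zero, zero_mul,
      coeff_derivative, coeff_legendrePoly, coeff_zero, Nat.cast_zero, coeff_C_zero]
    linear_combination legendreCoeff_recurrence k 0
  · simp only [coeff_add, coeff_X_mul, mul_coeff_zero, coeff_X_zero, zero_mul, coeff_C_mul,
      coeff_derivative, coeff_legendrePoly, coeff_zero]
    linear_combination (norm := (push_cast; ring1)) legendreCoeff_recurrence k 1
  · simp only [coeff_add, coeff_X_mul, coeff_C_mul, coeff_derivative, coeff_legendrePoly,
      coeff_zero]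
    linear_combination (norm := (push_cast; ring1)) legendreCoeff_recurrence k (m + 2)

theorem X_add_one_mul_derivative_X_add_one_pow {R : Type*} [CommSemiring R] (d : ℕ) :
    (X + 1) * derivative ((X + 1 : R[X]) ^ d) = C (d : R) * (X + 1) ^ d := by
  cases d with
  | zero => simp
  | succ d => simp [derivative_pow]; ring

noncomputable def columnPoly (n k : ℕ) : ℝ[X] := legendrePoly k * (X + 1) ^ (n - k)

-- `x (x + 1)² F'' + (1 + (2 - 2n) x + (1 - 2n) x²) F' + (n² x + k² + k - n) F = 0`
theorem columnPoly_ode {n k : ℕ} (hk : k ≤ n) :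
    X * derivative (derivative (columnPoly n k))
      + C 2 * (X * (X * derivative (derivative (columnPoly n k))))
      + X * (X * (X * derivative (derivative (columnPoly n k)))) + derivative (columnPoly n k)
      + C (2 - 2 * (n : ℝ)) * (X * derivative (columnPoly n k))
      + C (1 - 2 * (n : ℝ)) * (X * (X * derivative (columnPoly n k)))
      + C ((n : ℝ) ^ 2) * (X * columnPoly n k)
      + C ((k : ℝ) ^ 2 + k - n) * columnPoly n k = 0 := by
  set P := legendrePoly k
  set G : ℝ[X] := (X + 1) ^ (n - k)
  have hG₁ : (X + 1) * derivative G = (n - k : ℝ[X]) * G := by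
    rw [X_add_one_mul_derivative_X_add_one_pow, Nat.cast_sub hk, map_sub, map_natCast, map_natCast]
  have hG₂ : (X + 1) ^ 2 * derivative (derivative G) = (n - k : ℝ[X]) * (n - k - 1 : ℝ[X]) * G := by
    have h := congrArg derivative hG₁
    simp only [derivative_mul, derivative_add, derivative_sub, derivative_X, derivative_one,
      derivative_natCast, zero_mul, sub_zero, zero_add, one_mul, add_zero] at h
    linear_combination (X + 1) * h + (n - k - 1 : ℝ[X]) * hG₁
  have hP := legendrePoly_ode k
  have hF₁ : derivative (columnPoly n k) = derivative P * G + P * derivative G := derivative_mul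
  have hF₂ : derivative (derivative (columnPoly n k)) =
      derivative (derivative P) * G + 2 * (derivative P * derivative G)
        + P * derivative (derivative G) := by
    rw [hF₁, derivative_add, derivative_mul, derivative_mul]; ring
  rw [hF₂, hF₁, columnPoly]
  simp only [map_sub, map_add, map_mul, map_pow, map_one, map_ofNat, map_natCast] at hP ⊢
  linear_combination ((X + 1) * G) * hP
    + (2 * X * (X + 1) * derivative P + (X + 1) * P - 2 * n * (X * P)) * hG₁ + (X * P) * hG₂

theorem natDegree_columnPoly_le {n k : ℕ} (hk : k ≤ n) : (columnPoly n k).natDegree ≤ n := by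
  have hG : ((X + 1 : ℝ[X]) ^ (n - k)).natDegree = n - k := by
    simpa using natDegree_pow_X_add_C (n - k) (1 : ℝ)
  rw [columnPoly]
  calc _ ≤ k + (n - k) := natDegree_mul_le.trans (add_le_add (natDegree_legendrePoly_le k) hG.le)
    _ = n := by omega

theorem coeff_columnPoly {n k : ℕ} (hk : k ≤ n) (j : ℕ) :
    (columnPoly n k).coeff j = ∑ i ∈ Icc (max 0 (j + k - n)) (min j k),
      legendreCoeff k i * ((n - k).choose (j - i) : ℝ) := by
  rw [columnPoly, coeff_mul, Nat.sum_antidiagonal_eq_sum_range_succ_mk]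
  simp only [coeff_legendrePoly, coeff_X_add_one_pow]
  refine (sum_subset (fun i hi => ?_) fun i hi hi' => ?_).symm
  · simp only [mem_Icc, mem_range] at hi ⊢
    omega
  · simp only [mem_Icc, mem_range, not_and_or, not_le] at hi hi'
    rcases hi' with h | h
    · rw [Nat.choose_eq_zero_of_lt (by omega : n - k < j - i)]; simp
    · rw [legendreCoeff_eq_zero_of_lt (by omega : k < i), zero_mul]

theorem coeff_columnPoly_recurrence_zero {n k : ℕ} (hk : k ≤ n) :
    (columnPoly n k).coeff 1 + ((k : ℝ) * (k + 1) - n) * (columnPoly n k).coeff 0 = 0 := by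
  have h := congrArg (coeff · 0) (columnPoly_ode hk)
  simp only [coeff_add, coeff_derivative, coeff_zero, mul_coeff_zero, coeff_X_zero, zero_mul,
    Nat.cast_zero, coeff_C_zero] at h
  linear_combination (norm := (push_cast; ring1)) h

theorem coeff_columnPoly_recurrence {n k : ℕ} (hk : k ≤ n) (m : ℕ) :
    ((m : ℝ) + 2) ^ 2 * (columnPoly n k).coeff (m + 2)
      + ((n : ℝ) - m) ^ 2 * (columnPoly n k).coeff m
      - (2 * ((m : ℝ) + 1) * (n - m - 1) + n - k * (k + 1)) * (columnPoly n k).coeff (m + 1)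
      = 0 := by
  have h := congrArg (coeff · (m + 1)) (columnPoly_ode hk)
  rcases m with _ | _ | m <;>
  · simp only [coeff_add, coeff_X_mul, coeff_C_mul, coeff_derivative, coeff_zero, mul_coeff_zero,
      coeff_X_zero, zero_mul] at h ⊢
    linear_combination (norm := (push_cast; ring1)) h

noncomputable def column (n k j : ℕ) : ℝ := (columnPoly n k).coeff j / n.choose j

theorem Mentry_eq_sqrt_mul_column {n k : ℕ} (hk : k ≤ n) (j : ℕ) :
    Mentry n j k = √(2 * k + 1) * column n k j := by
  rw [Mentry, column, coeff_columnPoly hk]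
  simp only [legendreCoeff]
  ring

theorem coeff_columnPoly_eq_choose_mul_column {n k : ℕ} (hk : k ≤ n) (j : ℕ) :
    (columnPoly n k).coeff j = n.choose j * column n k j := by
  rcases le_or_gt j n with h | h
  · rw [column, mul_div_cancel₀]
    exact_mod_cast (Nat.choose_pos h).ne'
  · rw [coeff_eq_zero_of_natDegree_lt ((natDegree_columnPoly_le hk).trans_lt h),
      Nat.choose_eq_zero_of_lt h, Nat.cast_zero, zero_mul]

def bernsteinWeight (n j : ℕ) : ℝ := j * (n + 1 - j)

theorem sturmOp_column {n k j : ℕ} (hk : k ≤ n) (hj : j ≤ n) :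
    sturmOp (bernsteinWeight n) (column n k) j = -(k * (k + 1)) * column n k j := by
  cases j with
  | zero =>
    have h := coeff_columnPoly_recurrence_zero hk
    simp only [coeff_columnPoly_eq_choose_mul_column hk, Nat.choose_one_right,
      Nat.choose_zero_right] at h
    simp only [sturmOp, bernsteinWeight]
    push_cast at h ⊢
    linear_combination h
  | succ m =>
    have h := coeff_columnPoly_recurrence hk m
    simp only [coeff_columnPoly_eq_choose_mul_column hk] at h
    have e₁ := Nat.cast_choose_succ_right_eq (R := ℝ) n m
    have e₂ := Nat.cast_choose_succ_right_eq (R := ℝ) n (m + 1)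
    have hC : (n.choose (m + 1) : ℝ) ≠ 0 := by exact_mod_cast (Nat.choose_pos hj).ne'
    refine mul_left_cancel₀ hC ?_
    simp only [sturmOp, bernsteinWeight, Nat.add_sub_cancel, add_assoc, Nat.reduceAdd] at e₂ ⊢
    push_cast at h e₁ e₂ ⊢
    linear_combination h - ((m : ℝ) + 2) * column n k (m + 2) * e₂
      + ((n : ℝ) - m) * column n k m * e₁

/-- The columns of the Legendre-to-Bernstein conversion matrix M_n are pairwise orthogonal:
for 0 ≤ k ≠ ℓ ≤ n, Σ_{j=0}^n M_{n,jk}·M_{n,jℓ} = 0. -/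
theorem stmt16 (n k l : ℕ) (hk : k ≤ n) (hl : l ≤ n) (hkl : k ≠ l) :
    ∑ j ∈ Finset.range (n + 1), Mentry n j k * Mentry n j l = 0 := by
  have heigen : (-(k * (k + 1)) : ℝ) ≠ -(l * (l + 1)) := by
    intro h
    have hk₀ : (0 : ℝ) ≤ k := k.cast_nonneg
    have hl₀ : (0 : ℝ) ≤ l := l.cast_nonneg
    exact hkl (by exact_mod_cast (show (k : ℝ) = l by nlinarith))
  have horth : ∑ j ∈ range (n + 1), column n k j * column n l j = 0 :=
    sum_mul_eq_zero_of_sturmOp_eq_smul (by simp [bernsteinWeight]) (by simp [bernsteinWeight])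
      (fun j hj => sturmOp_column hk hj) (fun j hj => sturmOp_column hl hj) heigen
  simp only [Mentry_eq_sqrt_mul_column hk, Mentry_eq_sqrt_mul_column hl]
  rw [← mul_zero (√(2 * k + 1) * √(2 * l + 1)), ← horth, mul_sum]
  exact sum_congr rfl fun j _ => by ring
end
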